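/- arXiv:2510.26842 — 2 statements merged into one kernel-verified Lean document; each statement's English description precedes it below -/
import Mathlib

section
/- For all integers n, k, s ≥ 1, the Lah number with higher level dominates the Lah number of order s: L_s(n,k) ≥ T_s(n,k). -/
open Finset Polynomial

/-- Lah numbers with higher level: `lahH s n k` satisfies
`lahH s 0 0 = 1`, `lahH s n 0 = lahH s 0 k = 0` for `n, k > 0`, and
`lahH s n k = lahH s (n-1) (k-1) + (n+k-1)^s * lahH s (n-1) k` for `n, k ≥ 1`. -/
def lahH (s : ℕ) : ℕ → ℕ → ℕ
  | 0, 0 => 1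
  | 0, _ + 1 => 0
  | _ + 1, 0 => 0
  | n + 1, k + 1 => lahH s n k + (n + k + 1) ^ s * lahH s n (k + 1)

/-- Stirling numbers of the first kind with higher level. -/
def stirling1H (s : ℕ) : ℕ → ℕ → ℕ
  | 0, 0 => 1
  | 0, _ + 1 => 0
  | _ + 1, 0 => 0
  | n + 1, k + 1 => stirling1H s n k + n ^ s * stirling1H s n (k + 1)

/-- Stirling numbers of the second kind with higher level. -/
def stirling2H (s : ℕ) : ℕ → ℕ → ℕ
  | 0, 0 => 1
  | 0, _ + 1 => 0
  | _ + 1, 0 => 0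
  | n + 1, k + 1 => stirling2H s n k + (k + 1) ^ s * stirling2H s n (k + 1)

/-- Ordinary Stirling numbers of the second kind. -/
def stirling2 : ℕ → ℕ → ℕ
  | 0, 0 => 1
  | 0, _ + 1 => 0
  | _ + 1, 0 => 0
  | n + 1, k + 1 => stirling2 n k + (k + 1) * stirling2 n (k + 1)

/-- Lah numbers of order `s`: `lahOrd s n k = ∑_{j=k}^{n} c_s(n,j) * S_s(j,k)`. -/
def lahOrd (s n k : ℕ) : ℕ := ∑ j ∈ Finset.Icc k n, stirling1H s n j * stirling2H s j k

/-- Lah polynomial with higher level `L_n^s(x) = ∑_{k=0}^{n} L_s(n,k) x^k`. -/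
noncomputable def lahHPoly (s n : ℕ) : Polynomial ℤ :=
  ∑ k ∈ Finset.range (n + 1), Polynomial.C (lahH s n k : ℤ) * Polynomial.X ^ k

/-- Lah polynomial of order `s`: `ℒ_n^s(x) = ∑_{k=0}^{n} T_s(n,k) x^k`. -/
noncomputable def lahOrdPoly (s n : ℕ) : Polynomial ℤ :=
  ∑ k ∈ Finset.range (n + 1), Polynomial.C (lahOrd s n k : ℤ) * Polynomial.X ^ k

def lahT (s n k : ℕ) : ℕ := ∑ j ∈ Finset.range (n + 1), stirling1H s n j * stirling2H s j k

lemma stirling1H_eq_zero (s : ℕ) : ∀ n j, n < j → stirling1H s n j = 0 := by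
  intro n
  induction n with
  | zero => intro j hj; match j, hj with | j + 1, _ => rfl
  | succ n ih =>
    intro j hj
    match j, hj with
    | j + 1, hj =>
      have h1 : n < j := Nat.lt_of_succ_lt_succ hj
      simp [stirling1H, ih j h1, ih (j+1) (Nat.lt_succ_of_lt h1)]

lemma stirling2H_eq_zero (s : ℕ) : ∀ j k, j < k → stirling2H s j k = 0 := by
  intro j
  induction j with
  | zero => intro k hk; match k, hk with | k + 1, _ => rfl
  | succ j ih =>
    intro k hk
    match k, hk with
    | k + 1, hk =>
      have h1 : j < k := Nat.lt_of_succ_lt_succ hk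
      simp [stirling2H, ih k h1, ih (k+1) (Nat.lt_succ_of_lt h1)]

lemma lahOrd_le_lahT (s n k : ℕ) : lahOrd s n k ≤ lahT s n k := by
  apply Finset.sum_le_sum_of_subset
  intro j hj
  simp only [Finset.mem_Icc, Finset.mem_range] at *
  omega

lemma lahT_shift (s n m : ℕ) :
    ∑ j ∈ Finset.range (n + 1), stirling1H s n (j + 1) * stirling2H s (j + 1) (m + 1)
      = lahT s n (m + 1) := by
  rw [Finset.sum_range_succ, stirling1H_eq_zero s n (n+1) (Nat.lt_succ_self n)]
  conv_rhs => rw [lahT, Finset.sum_range_succ']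
  rw [stirling2H_eq_zero s 0 (m+1) (Nat.succ_pos m)]
  simp

lemma lahT_rec (s n k : ℕ) :
    lahT s (n + 1) (k + 1) = lahT s n k + ((k + 1) ^ s + n ^ s) * lahT s n (k + 1) := by
  rw [lahT, Finset.sum_range_succ']
  have h0 : stirling1H s (n+1) 0 * stirling2H s 0 (k+1) = 0 := by
    rw [stirling2H_eq_zero s 0 (k+1) (Nat.succ_pos k)]; ring
  rw [h0, add_zero]
  have hterm : ∀ j, stirling1H s (n+1) (j+1) * stirling2H s (j+1) (k+1)
      = stirling1H s n j * stirling2H s j k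
        + (k+1)^s * (stirling1H s n j * stirling2H s j (k+1))
        + n^s * (stirling1H s n (j+1) * stirling2H s (j+1) (k+1)) := by
    intro j
    have hC : stirling1H s (n+1) (j+1)
        = stirling1H s n j + n ^ s * stirling1H s n (j + 1) := rfl
    have hS : stirling2H s (j+1) (k+1)
        = stirling2H s j k + (k + 1) ^ s * stirling2H s j (k + 1) := rfl
    rw [hC, hS]
    ring
  simp only [hterm]
  rw [Finset.sum_add_distrib, Finset.sum_add_distrib, ← Finset.mul_sum, ← Finset.mul_sum,
    lahT_shift]
  rw [lahT, lahT]
  ring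

lemma myPowAddPowLe (a b s : ℕ) (hs : 1 ≤ s) : a ^ s + b ^ s ≤ (a + b) ^ s := by
  obtain ⟨t, rfl⟩ := Nat.exists_eq_add_of_le hs
  calc a ^ (1 + t) + b ^ (1 + t) ≤ a * (a + b) ^ t + b * (a + b) ^ t := by
        apply Nat.add_le_add
        · rw [pow_add, pow_one]
          exact Nat.mul_le_mul_left a (Nat.pow_le_pow_left (Nat.le_add_right a b) t)
        · rw [pow_add, pow_one]
          exact Nat.mul_le_mul_left b (Nat.pow_le_pow_left (Nat.le_add_left b a) t)
    _ = (a + b) ^ (1 + t) := by rw [pow_add, pow_one]; ring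

lemma lahT_le_lahH (s : ℕ) (hs : 1 ≤ s) : ∀ n k, lahT s n k ≤ lahH s n k := by
  intro n
  induction n with
  | zero =>
    intro k
    cases k with
    | zero => simp [lahT, stirling1H, stirling2H, lahH]
    | succ k => simp [lahT, stirling1H, stirling2H, lahH]
  | succ n ih =>
    intro k
    cases k with
    | zero =>
      have : lahT s (n+1) 0 = 0 := by
        apply Finset.sum_eq_zero
        intro j _
        cases j with
        | zero => show stirling1H s (n+1) 0 * _ = 0; simp [stirling1H]
        | succ j => show _ * stirling2H s (j+1) 0 = 0; simp [stirling2H]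
      omega
    | succ k =>
      rw [lahT_rec]
      show _ ≤ lahH s n k + (n + k + 1) ^ s * lahH s n (k + 1)
      have h1 : (k + 1) ^ s + n ^ s ≤ (n + k + 1) ^ s := by
        have := myPowAddPowLe (k+1) n s hs
        calc (k+1)^s + n^s ≤ (k + 1 + n) ^ s := this
          _ = (n + k + 1) ^ s := by ring_nf
      calc lahT s n k + ((k + 1) ^ s + n ^ s) * lahT s n (k + 1)
          ≤ lahH s n k + (n + k + 1) ^ s * lahH s n (k + 1) := by
            exact Nat.add_le_add (ih k) (Nat.mul_le_mul h1 (ih (k+1)))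

theorem lahH_ge_lahOrd (n k s : ℕ) (hn : 1 ≤ n) (hk : 1 ≤ k) (hs : 1 ≤ s) :
    lahH s n k ≥ lahOrd s n k :=
  le_trans (lahOrd_le_lahT s n k) (lahT_le_lahH s hs n k)
end

section
/- For all integers n, k, s ≥ 1, there is the chain of inequalities L_s(n,k) ≥ T_s(n,k) ≥ c_s(n,k) ≥ S_s(n,k), where L_s is the Lah number with higher level, T_s is the Lah number of order s, c_s is the Stirling number of the first kind with higher level, and S_s is the Stirling number of the second kind with higher level. -/
open Finset Polynomial

lemma s1_vanish (s : ℕ) : ∀ n k, n < k → stirling1H s n k = 0 := by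
  intro n
  induction n with
  | zero =>
    intro k h
    match k, h with
    | k + 1, _ => rfl
  | succ n ih =>
    intro k h
    match k, h with
    | k + 1, h =>
      simp [stirling1H, ih k (by omega), ih (k + 1) (by omega)]

lemma s2_vanish (s : ℕ) : ∀ n k, n < k → stirling2H s n k = 0 := by
  intro n
  induction n with
  | zero =>
    intro k h
    match k, h with
    | k + 1, _ => rfl
  | succ n ih =>
    intro k h
    match k, h with
    | k + 1, h =>
      simp [stirling2H, ih k (by omega), ih (k + 1) (by omega)]

lemma s2_diag (s : ℕ) : ∀ k, stirling2H s k k = 1 := by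
  intro k
  induction k with
  | zero => rfl
  | succ k ih =>
    simp [stirling2H, ih, s2_vanish s k (k + 1) (by omega)]

lemma lahOrd_eq_range (s n k : ℕ) :
    lahOrd s n k = ∑ j ∈ Finset.range (n + 1), stirling1H s n j * stirling2H s j k := by
  rw [lahOrd]
  apply Finset.sum_subset
  · intro j hj
    simp only [Finset.mem_Icc] at hj
    simp only [Finset.mem_range]
    omega
  · intro j hj hj2
    simp only [Finset.mem_range] at hj
    simp only [Finset.mem_Icc] at hj2
    rw [s2_vanish s j k (by omega), mul_zero]

lemma shift_sum (s n k : ℕ) :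
    ∑ i ∈ Finset.range (n + 1), stirling1H s n (i + 1) * stirling2H s (i + 1) (k + 1)
      = lahOrd s n (k + 1) := by
  rw [lahOrd_eq_range,
    Finset.sum_range_succ' (fun j => stirling1H s n j * stirling2H s j (k + 1)) n,
    Finset.sum_range_succ]
  simp [s1_vanish s n (n + 1) (by omega), stirling2H]

lemma lahOrd_rec (s n k : ℕ) :
    lahOrd s (n + 1) (k + 1)
      = lahOrd s n k + (n ^ s + (k + 1) ^ s) * lahOrd s n (k + 1) := by
  rw [lahOrd_eq_range s (n + 1),
    Finset.sum_range_succ' (fun j => stirling1H s (n + 1) j * stirling2H s j (k + 1)) (n + 1)]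
  have h0 : stirling1H s (n + 1) 0 * stirling2H s 0 (k + 1) = 0 := by
    simp [stirling1H]
  rw [h0, add_zero]
  have e1 : ∀ i ∈ Finset.range (n + 1),
      stirling1H s (n + 1) (i + 1) * stirling2H s (i + 1) (k + 1)
        = stirling1H s n i * stirling2H s i k
          + (k + 1) ^ s * (stirling1H s n i * stirling2H s i (k + 1))
          + n ^ s * (stirling1H s n (i + 1) * stirling2H s (i + 1) (k + 1)) := by
    intro i _
    simp only [stirling1H, stirling2H]
    ring
  rw [Finset.sum_congr rfl e1, Finset.sum_add_distrib, Finset.sum_add_distrib,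
    ← Finset.mul_sum, ← Finset.mul_sum, shift_sum, ← lahOrd_eq_range, ← lahOrd_eq_range]
  ring

lemma lahOrd_succ_zero (s n : ℕ) : lahOrd s (n + 1) 0 = 0 := by
  rw [lahOrd_eq_range]
  apply Finset.sum_eq_zero
  intro j _
  match j with
  | 0 => simp [stirling1H]
  | j + 1 => simp [stirling2H]

lemma lahOrd_le_lahH (s : ℕ) (hs : 1 ≤ s) : ∀ n k, lahOrd s n k ≤ lahH s n k := by
  intro n
  induction n with
  | zero =>
    intro k
    match k with
    | 0 => simp [lahOrd, lahH, stirling1H, stirling2H]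
    | k + 1 => simp [lahOrd]
  | succ n ih =>
    intro k
    match k with
    | 0 => rw [lahOrd_succ_zero]; exact Nat.zero_le _
    | k + 1 =>
      rw [lahOrd_rec]
      simp only [lahH]
      have hpow : n ^ s + (k + 1) ^ s ≤ (n + (k + 1)) ^ s :=
        pow_add_pow_le (Nat.zero_le n) (Nat.zero_le (k + 1)) (by omega)
      have hpow' : n ^ s + (k + 1) ^ s ≤ (n + k + 1) ^ s := by
        have : n + (k + 1) = n + k + 1 := by omega
        rwa [this] at hpow
      exact Nat.add_le_add (ih k) (Nat.mul_le_mul hpow' (ih (k + 1)))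

lemma stirling1H_le_lahOrd (s n k : ℕ) : stirling1H s n k ≤ lahOrd s n k := by
  by_cases h : k ≤ n
  · rw [lahOrd]
    have hk : k ∈ Finset.Icc k n := by simp [h]
    have := Finset.single_le_sum (f := fun j => stirling1H s n j * stirling2H s j k)
      (fun i _ => Nat.zero_le _) hk
    simpa [s2_diag] using this
  · rw [s1_vanish s n k (by omega)]
    exact Nat.zero_le _

lemma s2_le_s1 (s : ℕ) : ∀ n k, stirling2H s n k ≤ stirling1H s n k := by
  intro n
  induction n with
  | zero =>
    intro k
    match k with
    | 0 => exact le_refl _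
    | k + 1 => exact le_refl _
  | succ n ih =>
    intro k
    match k with
    | 0 => exact le_refl _
    | k + 1 =>
      simp only [stirling1H, stirling2H]
      by_cases h : k + 1 ≤ n
      · exact Nat.add_le_add (ih k) (Nat.mul_le_mul (Nat.pow_le_pow_left h s) (ih (k + 1)))
      · rw [s2_vanish s n (k + 1) (by omega), mul_zero, add_zero]
        exact le_trans (ih k) (Nat.le_add_right _ _)

theorem lahH_ge_lahOrd_ge_stirling1H_ge_stirling2H (n k s : ℕ)
    (hn : 1 ≤ n) (hk : 1 ≤ k) (hs : 1 ≤ s) :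
    lahH s n k ≥ lahOrd s n k ∧ lahOrd s n k ≥ stirling1H s n k ∧
      stirling1H s n k ≥ stirling2H s n k :=
  ⟨lahOrd_le_lahH s hs n k, stirling1H_le_lahOrd s n k, s2_le_s1 s n k⟩
end
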